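/- arXiv:2406.07640 — 6 statements merged into one kernel-verified Lean document; each statement's English description precedes it below -/
import Mathlib

section
/- Let Y ↔ X ↔ (U,V) form a Markov chain of random variables on finite alphabets. If there exists a Markov kernel M from U's alphabet to V's alphabet such that for every x, the distribution of V given X = x equals the composition of M with the conditional distribution of U given X = x, then I(Y;U) ≥ I(Y;V). -/
open Finset

/-- A probability vector on a finite set. -/
def ProbFun {A : Type*} [Fintype A] (p : A → ℝ) : Prop :=
  (∀ a, 0 ≤ p a) ∧ ∑ a, p a = 1

/-- A joint probability on finite sets. -/
def JointFun {A B : Type*} [Fintype A] [Fintype B] (p : A → B → ℝ) : Prop :=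
  (∀ a b, 0 ≤ p a b) ∧ ∑ a, ∑ b, p a b = 1

/-- A Markov kernel (stochastic matrix) from `A` to `B`. -/
def Kern {A B : Type*} [Fintype B] (K : A → B → ℝ) : Prop :=
  (∀ a b, 0 ≤ K a b) ∧ ∀ a, ∑ b, K a b = 1

/-- Composition of kernels: `(M ∘ K)(v|x) = ∑ u K(u|x) M(v|u)`. -/
def kcomp {X U V : Type*} [Fintype U] (M : U → V → ℝ) (K : X → U → ℝ) : X → V → ℝ :=
  fun x v => ∑ u, K x u * M u v

/-- Pushforward of a distribution through a kernel. -/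
def kpush {X U : Type*} [Fintype X] (K : X → U → ℝ) (q : X → ℝ) : U → ℝ :=
  fun u => ∑ x, q x * K x u

/-- Mutual information of a finite joint pmf. -/
noncomputable def MIfin {A B : Type*} [Fintype A] [Fintype B] (p : A → B → ℝ) : ℝ :=
  ∑ a, ∑ b, p a b * Real.log (p a b / ((∑ b', p a b') * (∑ a', p a' b)))

/-- Joint distribution of concept `Y` and embedding, for a joint `p` on `Y × X`
and a channel `K` from `X` (this encodes the Markov chain `Y ↔ X ↔ U`). -/
def jointOut {Y X U : Type*} [Fintype X] (p : Y → X → ℝ) (K : X → U → ℝ) : Y → U → ℝ :=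
  fun y u => ∑ x, p y x * K x u

/-- Total variation distance on a finite set. -/
noncomputable def tvDist {A : Type*} [Fintype A] (p q : A → ℝ) : ℝ :=
  (∑ a, |p a - q a|) / 2

/-- Bayes risk: infimum over randomized decision rules of the error probability. -/
noncomputable def bayesRisk {Y U : Type*} [Fintype Y] [Fintype U] (r : Y → U → ℝ) : ℝ :=
  sInf { e | ∃ ρ : U → Y → ℝ, Kern ρ ∧ e = 1 - ∑ y, ∑ u, r y u * ρ u y }

/-- Le Cam deficiency of `KV` relative to `KU` under input distribution `pX`. -/
noncomputable def deficiency {X U V : Type*} [Fintype X] [Fintype U] [Fintype V]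
    (pX : X → ℝ) (KU : X → U → ℝ) (KV : X → V → ℝ) : ℝ :=
  sInf { d | ∃ M : U → V → ℝ, Kern M ∧ d = ∑ x, pX x * tvDist (kcomp M KU x) (KV x) }

/-- Kullback–Leibler divergence on a finite set, `⊤` if absolute continuity fails. -/
noncomputable def KLfin {A : Type*} [Fintype A] (p q : A → ℝ) : EReal :=
  if ∀ a, q a = 0 → p a = 0 then ((∑ a, p a * Real.log (p a / q a) : ℝ) : EReal) else ⊤

/-!
The `(y, v)` term of `I(Y;V)` is `r log (r / (r_Y r_V))` with `r(y,v) = ∑ᵤ q(y,u) M(u,v)`, and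
both `r` and `r_Y r_V` are `M`-mixtures of `q` and `q_Y q_U`. The log-sum inequality bounds this
term by `∑ᵤ M(u,v) q log (q / (q_Y q_U))`, and summing over `v` with `∑ᵥ M(u,v) = 1` gives the
`y`-row of `I(Y;U)`.
-/

namespace Real

lemma mul_log_add_sub_le_mul_log_div {a b c : ℝ} (ha : 0 ≤ a) (hb : 0 ≤ b) (hc : 0 < c)
    (hab : b = 0 → a = 0) :
    a * log c + a - c * b ≤ a * log (a / b) := by
  rcases ha.eq_or_lt with rfl | ha
  · simpa using mul_nonneg hc.le hb
  have hb : 0 < b := hb.lt_of_ne fun h => ha.ne' (hab h.symm)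
  -- `log x ≥ 1 - 1/x` at `x = a / (b c)`
  have key := one_sub_inv_le_log_of_pos (show 0 < a / (b * c) by positivity)
  have hsplit : log (a / b) = log (a / (b * c)) + log c := by
    rw [← log_mul (by positivity) hc.ne', div_mul_eq_mul_div, mul_div_mul_right _ _ hc.ne']
  rw [hsplit, inv_div] at *
  have : a * (1 - b * c / a) = a - c * b := by field_simp
  nlinarith [mul_le_mul_of_nonneg_left key ha.le]

lemma sum_mul_log_div_sum_le {ι : Type*} (s : Finset ι) (a b : ι → ℝ)
    (ha : ∀ i ∈ s, 0 ≤ a i) (hb : ∀ i ∈ s, 0 ≤ b i) (hab : ∀ i ∈ s, b i = 0 → a i = 0) :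
    (∑ i ∈ s, a i) * log ((∑ i ∈ s, a i) / ∑ i ∈ s, b i) ≤ ∑ i ∈ s, a i * log (a i / b i) := by
  set A := ∑ i ∈ s, a i
  set B := ∑ i ∈ s, b i
  rcases (sum_nonneg ha).eq_or_lt with hA | hA
  · rw [show A = 0 from hA.symm, zero_mul]
    exact sum_nonneg fun i hi => by rw [(sum_eq_zero_iff_of_nonneg ha).1 hA.symm i hi, zero_mul]
  have hB : 0 < B := by
    refine (sum_nonneg hb).lt_of_ne fun hB => hA.ne' (sum_eq_zero fun i hi => ?_)
    exact hab i hi ((sum_eq_zero_iff_of_nonneg hb).1 hB.symm i hi)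
  calc A * log (A / B) = ∑ i ∈ s, (a i * log (A / B) + a i - A / B * b i) := by
        rw [sum_sub_distrib, sum_add_distrib, ← sum_mul, ← mul_sum, div_mul_cancel₀ _ hB.ne']
        ring
    _ ≤ ∑ i ∈ s, a i * log (a i / b i) := sum_le_sum fun i hi =>
        mul_log_add_sub_le_mul_log_div (ha i hi) (hb i hi) (by positivity) (hab i hi)

end Real

lemma sum_kcomp_right {A B C : Type*} [Fintype B] [Fintype C] {M : B → C → ℝ} (hM : Kern M)
    (q : A → B → ℝ) (a : A) :
    ∑ c, kcomp M q a c = ∑ b, q a b := by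
  simp only [kcomp]
  rw [sum_comm]
  exact sum_congr rfl fun b _ => by rw [← mul_sum, hM.2 b, mul_one]

lemma sum_kcomp_left {A B C : Type*} [Fintype A] [Fintype B] (M : B → C → ℝ) (q : A → B → ℝ)
    (c : C) :
    ∑ a, kcomp M q a c = ∑ b, (∑ a, q a b) * M b c := by
  simp only [kcomp, sum_mul]
  exact sum_comm

lemma eq_zero_of_sum_mul_sum_eq_zero {A B : Type*} [Fintype A] [Fintype B] {q : A → B → ℝ}
    (hq : ∀ a b, 0 ≤ q a b) {a : A} {b : B}
    (h : (∑ b', q a b') * (∑ a', q a' b) = 0) : q a b = 0 := by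
  refine le_antisymm ?_ (hq a b)
  rcases mul_eq_zero.1 h with h | h
  · exact h ▸ single_le_sum (fun b' _ => hq a b') (mem_univ b)
  · exact h ▸ single_le_sum (fun a' _ => hq a' b) (mem_univ a)

theorem MIfin_kcomp_le {A B C : Type*} [Fintype A] [Fintype B] [Fintype C] {q : A → B → ℝ}
    (hq : ∀ a b, 0 ≤ q a b) {M : B → C → ℝ} (hM : Kern M) :
    MIfin (kcomp M q) ≤ MIfin q := by
  unfold MIfin
  refine sum_le_sum fun a _ => ?_
  calc ∑ c, kcomp M q a c *
          Real.log (kcomp M q a c / ((∑ c', kcomp M q a c') * ∑ a', kcomp M q a' c))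
      ≤ ∑ c, ∑ b, q a b * M b c *
          Real.log (q a b * M b c / ((∑ b', q a b') * (∑ a', q a' b) * M b c)) := by
        refine sum_le_sum fun c _ => ?_
        have hsum : (∑ c', kcomp M q a c') * ∑ a', kcomp M q a' c
            = ∑ b, (∑ b', q a b') * (∑ a', q a' b) * M b c := by
          rw [sum_kcomp_right hM, sum_kcomp_left, mul_sum]
          simp only [mul_assoc]
        rw [hsum]
        refine Real.sum_mul_log_div_sum_le _ _ _ (fun b _ => mul_nonneg (hq a b) (hM.1 b c))
          (fun b _ => mul_nonneg (mul_nonneg (sum_nonneg fun b' _ => hq a b')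
            (sum_nonneg fun a' _ => hq a' b)) (hM.1 b c)) fun b _ h => ?_
        rcases mul_eq_zero.1 h with h | h
        · rw [eq_zero_of_sum_mul_sum_eq_zero hq h, zero_mul]
        · rw [h, mul_zero]
    _ = ∑ b, ∑ c, q a b * Real.log (q a b / ((∑ b', q a b') * ∑ a', q a' b)) * M b c := by
        rw [sum_comm]
        refine sum_congr rfl fun b _ => sum_congr rfl fun c _ => ?_
        rcases eq_or_ne (M b c) 0 with h | h
        · simp [h]
        · rw [mul_div_mul_right _ _ h]
          ring
    _ = ∑ b, q a b * Real.log (q a b / ((∑ b', q a b') * ∑ a', q a' b)) := by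
        simp only [← mul_sum, hM.2, mul_one]

lemma jointOut_kcomp {Y X U V : Type*} [Fintype X] [Fintype U] (p : Y → X → ℝ)
    (K : X → U → ℝ) (M : U → V → ℝ) : jointOut p (kcomp M K) = kcomp M (jointOut p K) := by
  ext y v
  simp only [jointOut, kcomp, mul_sum, sum_mul]
  rw [sum_comm]
  exact sum_congr rfl fun _ _ => sum_congr rfl fun _ _ => by ring

theorem stmt0_general {Y X U V : Type*} [Fintype Y] [Fintype X] [Fintype U] [Fintype V]
    (p : Y → X → ℝ) (hp : JointFun p)
    (KU : X → U → ℝ) (hKU : Kern KU)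
    (KV : X → V → ℝ)
    (M : U → V → ℝ) (hM : Kern M)
    (hdeg : kcomp M KU = KV) :
    MIfin (jointOut p KV) ≤ MIfin (jointOut p KU) := by
  rw [← hdeg, jointOut_kcomp]
  exact MIfin_kcomp_le (fun y u => sum_nonneg fun x _ => mul_nonneg (hp.1 y x) (hKU.1 x u)) hM

/-- sufficiency implies informativeness (data processing). -/
theorem stmt0 {Y X U V : Type*} [Fintype Y] [Fintype X] [Fintype U] [Fintype V]
    (p : Y → X → ℝ) (hp : JointFun p)
    (KU : X → U → ℝ) (hKU : Kern KU)
    (KV : X → V → ℝ) (hKV : Kern KV)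
    (M : U → V → ℝ) (hM : Kern M)
    (hdeg : kcomp M KU = KV) :
    MIfin (jointOut p KV) ≤ MIfin (jointOut p KU) :=
  stmt0_general p hp KU hKU KV M hM hdeg
end

section
/- There exist binary-input binary-output channels P_{U|X} and P_{V|X} (2×2 stochastic matrices) such that P_{V|X} is not a degraded version of P_{U|X} (i.e., there is no 2×2 stochastic matrix M with P_{V|X} = P_{U|X} M), yet P_{U|X} is more informative than P_{V|X}: for every joint distribution P_{YX} on a finite set Y times {0,1} inducing the Markov chain Y ↔ X ↔ (U,V), one has I(Y;U) ≥ I(Y;V). -/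
open Finset

/-!
For a binary output, `I(Y;U) = ∑ y, P(y) d(a_y ‖ ā)` where `d` is the binary divergence,
`a_y = P(U = 0 | Y = y)` and `ā` its mean. Every output probability of `chanV` is the
corresponding one of `chanU` moved by `1/5` towards `1/2`, and on `[(1 + c)/2, 1)` such a shift
by `c` can only decrease `d`: `∂ₜ d(x ‖ t) = (t - x) / (t (1 - t))` and `t (1 - t)` decreases
on `[1/2, 1]`, so `d(x ‖ t) - d(x - c ‖ t - c)` is minimal, and zero, at `t = x`.
-/

open Real Set

noncomputable def binKL (x t : ℝ) : ℝ :=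
  x * log (x / t) + (1 - x) * log ((1 - x) / (1 - t))

lemma hasDerivAt_binKL {x t : ℝ} (hx₀ : 0 < x) (hx₁ : x < 1) (ht₀ : 0 < t) (ht₁ : t < 1) :
    HasDerivAt (binKL x) ((t - x) / (t * (1 - t))) t := by
  have h1t : 1 - t ≠ 0 := sub_ne_zero.2 ht₁.ne'
  have hlog₀ : HasDerivAt (fun s => log (x * s⁻¹)) (x * -(t ^ 2)⁻¹ / (x * t⁻¹)) t :=
    ((hasDerivAt_inv ht₀.ne').const_mul x).log (by positivity)
  have hlog₁ : HasDerivAt (fun s => log ((1 - x) * (1 - s)⁻¹))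
      ((1 - x) * (-(-1) / (1 - t) ^ 2) / ((1 - x) * (1 - t)⁻¹)) t :=
    ((((hasDerivAt_id t).const_sub 1).inv h1t).const_mul (1 - x)).log
      (mul_ne_zero (sub_ne_zero.2 hx₁.ne') (inv_ne_zero h1t))
  have hsum := (hlog₀.const_mul x).add (hlog₁.const_mul (1 - x))
  simp only [← div_eq_mul_inv] at hsum
  refine hsum.congr_deriv ?_
  field_simp
  ring

lemma binKL_sub_le_binKL {c x t : ℝ} (hc : 0 ≤ c) (hx : x ∈ Ico ((1 + c) / 2) 1)
    (ht : t ∈ Ico ((1 + c) / 2) 1) : binKL (x - c) (t - c) ≤ binKL x t := by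
  obtain ⟨hx₀, hx₁⟩ := id hx
  set G : ℝ → ℝ := fun s => binKL x s - binKL (x - c) (s - c)
  have hG : ∀ s ∈ Ico ((1 + c) / 2) 1,
      HasDerivAt G ((s - x) * (1 / (s * (1 - s)) - 1 / ((s - c) * (1 - (s - c))))) s := by
    rintro s ⟨hs₀, hs₁⟩
    have hU := hasDerivAt_binKL (x := x) (t := s) (by linarith) hx₁ (by linarith) hs₁
    have hV := (hasDerivAt_binKL (x := x - c) (t := s - c) (by linarith) (by linarith)
      (by linarith) (by linarith)).comp s ((hasDerivAt_id s).sub_const c)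
    exact (hU.sub hV).congr_deriv (by ring)
  -- `s (1 - s)` decreases on `[1/2, 1]`, and `s - c` and `s` have midpoint at least `1/2`.
  have hG' : ∀ s ∈ Ico ((1 + c) / 2) 1,
      0 ≤ 1 / (s * (1 - s)) - 1 / ((s - c) * (1 - (s - c))) := by
    rintro s ⟨hs₀, hs₁⟩
    exact sub_nonneg.2 (one_div_le_one_div_of_le (by nlinarith) (by nlinarith))
  have hmin : IsMinOn G (Ico ((1 + c) / 2) 1) x := by
    refine isMinOn_Ico_of_deriv (hG _ ⟨le_rfl, by linarith⟩).continuousAt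
      (hG x hx).continuousAt (fun s hs => (hG s ⟨hs.1.le, by linarith [hs.2]⟩)
        |>.differentiableAt.differentiableWithinAt)
      (fun s hs => (hG s ⟨by linarith [hs.1], hs.2⟩)
        |>.differentiableAt.differentiableWithinAt) (fun s hs => ?_) (fun s hs => ?_)
    · have hs' : s ∈ Ico ((1 + c) / 2) 1 := ⟨hs.1.le, by linarith [hs.2]⟩
      rw [(hG s hs').deriv]
      exact mul_nonpos_of_nonpos_of_nonneg (by linarith [hs.2]) (hG' s hs')
    · have hs' : s ∈ Ico ((1 + c) / 2) 1 := ⟨by linarith [hs.1], hs.2⟩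
      rw [(hG s hs').deriv]
      exact mul_nonneg (by linarith [hs.1]) (hG' s hs')
  have hGx : G x = 0 := by
    have h₀ : x - c ≠ 0 := by linarith
    have h₁ : 1 - x ≠ 0 := by linarith
    have h₂ : 1 - (x - c) ≠ 0 := by linarith
    have h₃ : x ≠ 0 := by linarith
    simp [G, binKL, div_self, h₀, h₁, h₂, h₃]
  have := isMinOn_iff.1 hmin t ht
  simp only [hGx, G] at this
  linarith

section BinaryOutput

variable {Y : Type*}

-- The joint law of `Y` and a binary output with `P(Y = y) = q y`, `P(0 | y) = a y`.
def binJoint (q a : Y → ℝ) : Y → Fin 2 → ℝ :=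
  fun y => ![q y * a y, q y * (1 - a y)]

lemma MIfin_binJoint [Fintype Y] {q a : Y → ℝ} (hq : ∑ y, q y = 1) :
    MIfin (binJoint q a) = ∑ y, q y * binKL (a y) (∑ y', q y' * a y') := by
  set S := ∑ y', q y' * a y'
  have hS₁ : ∑ y, q y * (1 - a y) = 1 - S := by
    simp only [mul_sub, mul_one, sum_sub_distrib, hq, S]
  unfold MIfin
  refine sum_congr rfl fun y _ => ?_
  simp only [binJoint, Fin.sum_univ_two, Matrix.cons_val_zero, Matrix.cons_val_one,
    Matrix.cons_val_fin_one, hS₁]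
  rcases eq_or_ne (q y) 0 with h | h
  · simp [h]
  · rw [← mul_add, add_sub_cancel, mul_one, mul_div_mul_left _ _ h,
      mul_div_mul_left _ _ h, binKL]
    ring

lemma exists_binJoint_eq [Fintype Y] {p : Y → Fin 2 → ℝ} (hp : JointFun p) :
    ∃ q w : Y → ℝ, (∀ y, 0 ≤ q y) ∧ ∑ y, q y = 1 ∧ (∀ y, w y ∈ Set.Icc 0 1) ∧
      p = binJoint q w := by
  obtain ⟨hp₀, hp₁⟩ := hp
  refine ⟨fun y => p y 0 + p y 1, fun y => p y 0 / (p y 0 + p y 1),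
    fun y => add_nonneg (hp₀ y 0) (hp₀ y 1), by simpa [Fin.sum_univ_two] using hp₁,
    fun y => ⟨div_nonneg (hp₀ y 0) (add_nonneg (hp₀ y 0) (hp₀ y 1)),
      div_le_one_of_le₀ (le_add_of_nonneg_right (hp₀ y 1)) (add_nonneg (hp₀ y 0) (hp₀ y 1))⟩, ?_⟩
  funext y x
  have h₀ : p y 0 = (p y 0 + p y 1) * (p y 0 / (p y 0 + p y 1)) := by
    rw [mul_comm, div_mul_cancel_of_imp]
    intro h
    linarith [hp₀ y 0, hp₀ y 1]
  fin_cases x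
  · exact h₀
  · change p y 1 = (p y 0 + p y 1) * (1 - p y 0 / (p y 0 + p y 1))
    rw [mul_sub, mul_one, ← h₀]
    ring

lemma jointOut_binJoint {q w : Y → ℝ} {K : Fin 2 → Fin 2 → ℝ} (hK : Kern K) :
    jointOut (binJoint q w) K = binJoint q fun y => w y * K 0 0 + (1 - w y) * K 1 0 := by
  have hK₁ : ∀ x, K x 1 = 1 - K x 0 := fun x => by
    have := hK.2 x
    rw [Fin.sum_univ_two] at this
    linarith
  funext y u
  fin_cases u <;>
    simp only [jointOut, binJoint, Fin.sum_univ_two, hK₁, Fin.isValue, Fin.zero_eta, Fin.mk_one,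
      Matrix.cons_val_zero, Matrix.cons_val_one, Matrix.cons_val_fin_one] <;>
    ring

lemma MIfin_binJoint_sub_le [Fintype Y] {q a : Y → ℝ} {c : ℝ} (hq₀ : ∀ y, 0 ≤ q y)
    (hq : ∑ y, q y = 1) (hc : 0 ≤ c) (ha : ∀ y, a y ∈ Ico ((1 + c) / 2) 1) :
    MIfin (binJoint q fun y => a y - c) ≤ MIfin (binJoint q a) := by
  have hS : ∑ y, q y * a y ∈ Ico ((1 + c) / 2) 1 :=
    (convex_Ico _ _).sum_mem (fun y _ => hq₀ y) hq (fun y _ => ha y)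
  have hSc : ∑ y, q y * (a y - c) = ∑ y, q y * a y - c := by
    simp only [mul_sub, sum_sub_distrib, ← sum_mul, hq, one_mul]
  rw [MIfin_binJoint hq, MIfin_binJoint hq, hSc]
  exact sum_le_sum fun y _ =>
    mul_le_mul_of_nonneg_left (binKL_sub_le_binKL hc (ha y) hS) (hq₀ y)

end BinaryOutput

noncomputable def chanU : Fin 2 → Fin 2 → ℝ := ![![9/10, 1/10], ![7/10, 3/10]]

noncomputable def chanV : Fin 2 → Fin 2 → ℝ := ![![7/10, 3/10], ![1/2, 1/2]]

lemma kern_chanU : Kern chanU :=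
  ⟨fun x u => by fin_cases x <;> fin_cases u <;> norm_num [chanU],
    fun x => by fin_cases x <;> norm_num [chanU, Fin.sum_univ_two]⟩

lemma kern_chanV : Kern chanV :=
  ⟨fun x u => by fin_cases x <;> fin_cases u <;> norm_num [chanV],
    fun x => by fin_cases x <;> norm_num [chanV, Fin.sum_univ_two]⟩

-- Matching the first columns forces `M 0 0 = 4/5` and `M 1 0 = -1/5`.
lemma not_exists_kcomp_chanU_eq_chanV : ¬ ∃ M, Kern M ∧ kcomp M chanU = chanV := by
  rintro ⟨M, ⟨hM₀, -⟩, hM⟩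
  have h₀ : 9/10 * M 0 0 + 1/10 * M 1 0 = 7/10 := by
    simpa [kcomp, chanU, chanV, Fin.sum_univ_two] using congrFun (congrFun hM 0) 0
  have h₁ : 7/10 * M 0 0 + 3/10 * M 1 0 = 1/2 := by
    simpa [kcomp, chanU, chanV, Fin.sum_univ_two] using congrFun (congrFun hM 1) 0
  linarith [hM₀ 1 0]

lemma MIfin_jointOut_chanV_le {Y : Type*} [Fintype Y] {p : Y → Fin 2 → ℝ} (hp : JointFun p) :
    MIfin (jointOut p chanV) ≤ MIfin (jointOut p chanU) := by
  obtain ⟨q, w, hq₀, hq, hw, rfl⟩ := exists_binJoint_eq hp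
  set a : Y → ℝ := fun y => w y * (9/10) + (1 - w y) * (7/10)
  have hU : jointOut (binJoint q w) chanU = binJoint q a := jointOut_binJoint kern_chanU
  have hV : jointOut (binJoint q w) chanV = binJoint q fun y => a y - 1/5 := by
    rw [jointOut_binJoint kern_chanV]
    congr 1
    funext y
    change w y * (7/10) + (1 - w y) * (1/2) = w y * (9/10) + (1 - w y) * (7/10) - 1/5
    ring
  rw [hU, hV]
  refine MIfin_binJoint_sub_le hq₀ hq (by norm_num) fun y => ⟨?_, ?_⟩ <;>
    simp only [a] <;> linarith [(hw y).1, (hw y).2]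

/-- informativeness does not imply sufficiency (Körner–Marton example). -/
theorem stmt1 : ∃ KU KV : Fin 2 → Fin 2 → ℝ, Kern KU ∧ Kern KV ∧
    (¬ ∃ M : Fin 2 → Fin 2 → ℝ, Kern M ∧ kcomp M KU = KV) ∧
    (∀ (Y : Type) [Fintype Y] (p : Y → Fin 2 → ℝ), JointFun p →
      MIfin (jointOut p KV) ≤ MIfin (jointOut p KU)) :=
  ⟨chanU, chanV, kern_chanU, kern_chanV, not_exists_kcomp_chanU_eq_chanV,
    fun _ _ _ hp => MIfin_jointOut_chanV_le hp⟩
end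

section
/- Let P_{U|X} and P_{V|X} be Markov kernels on finite alphabets, and suppose P_{U|X} is more informative than P_{V|X}, i.e., I(Y;U) ≥ I(Y;V) for every joint distribution P_{YX} inducing the Markov chain Y ↔ X ↔ (U,V). Then for any two distributions P_{X|Y=y₀}, P_{X|Y=y₁} on X, the induced output distributions satisfy KL(P_{U|Y=y₀} ‖ P_{U|Y=y₁}) ≥ KL(P_{V|Y=y₀} ‖ P_{V|Y=y₁}), where P_{U|Y=y} is the pushforward of P_{X|Y=y} through the kernel P_{U|X} and similarly for V. -/
open Finset

open Real Filter Topology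

/-! The mutual information between `Y ~ Bernoulli(t)` and the output of a channel fed with `q₀`
or `q₁` according to `Y` is `f(t) = H(t p₀ + (1-t) p₁) - t H(p₀) - (1-t) H(p₁)`, where `pᵢ` is the
pushforward of `qᵢ`. Since `f(0) = 0`, the slope `f(t) / t` tends as `t → 0⁺` to `f'(0)`, which is
`KL(p₀ ‖ p₁)` when `p₀ ≪ p₁`; otherwise some coordinate contributes `-p₀(a) t log t` and the slope
tends to `+∞`. Being more informative compares these slopes for every `t ∈ (0, 1)`, hence their
limits. -/

noncomputable def jensenGap (p q t : ℝ) : ℝ :=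
  negMulLog (t * p + (1 - t) * q) - t * negMulLog p - (1 - t) * negMulLog q

theorem mul_log_div_eq {m : ℝ} (x : ℝ) (hm : m ≠ 0) : x * log (x / m) = x * log x - x * log m := by
  rcases eq_or_ne x 0 with rfl | hx
  · simp
  · rw [log_div hx hm]; ring

theorem jensenGap_nonneg {p q t : ℝ} (hp : 0 ≤ p) (hq : 0 ≤ q) (ht₀ : 0 ≤ t) (ht₁ : t ≤ 1) :
    0 ≤ jensenGap p q t := by
  have hconc := concaveOn_negMulLog.2 (Set.mem_Ici.2 hp) (Set.mem_Ici.2 hq) ht₀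
    (sub_nonneg.2 ht₁) (by ring)
  simp only [smul_eq_mul] at hconc
  unfold jensenGap
  linarith

theorem jensenGap_zero_right (p t : ℝ) : jensenGap p 0 t = p * negMulLog t := by
  simp [jensenGap, negMulLog_mul]

theorem hasDerivAt_jensenGap {p q : ℝ} (h : q = 0 → p = 0) :
    HasDerivAt (jensenGap p q) (p * log (p / q) - p + q) 0 := by
  rcases eq_or_ne q 0 with rfl | hq
  · obtain rfl := h rfl
    have : jensenGap 0 0 = fun _ => 0 := by funext t; simp [jensenGap]
    simpa [this] using hasDerivAt_const (0 : ℝ) (0 : ℝ)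
  have hline : HasDerivAt (fun t : ℝ => t * p + (1 - t) * q) (p - q) 0 :=
    (((hasDerivAt_id 0).mul_const p).add
      (((hasDerivAt_const 0 1).sub (hasDerivAt_id 0)).mul_const q)).congr_deriv (by ring)
  have hneg := (hasDerivAt_negMulLog (x := 0 * p + (1 - 0) * q) (by simpa using hq)).comp 0 hline
  refine ((hneg.sub ((hasDerivAt_id 0).mul_const (negMulLog p))).sub
    (((hasDerivAt_const 0 1).sub (hasDerivAt_id 0)).mul_const (negMulLog q))).congr_deriv ?_
  simp only [zero_mul, sub_zero, one_mul, zero_add, negMulLog, neg_mul, mul_neg, sub_neg_eq_add,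
    zero_sub, neg_neg, mul_log_div_eq p hq]
  ring

section Slope

variable {A : Type*} [Fintype A] {p q : A → ℝ}

theorem tendsto_sum_jensenGap_div (hp : ∑ a, p a = 1) (hq : ∑ a, q a = 1)
    (hpq : ∀ a, q a = 0 → p a = 0) :
    Tendsto (fun t => t⁻¹ * ∑ a, jensenGap (p a) (q a) t) (𝓝[>] 0)
      (𝓝 (∑ a, p a * log (p a / q a))) := by
  have hderiv : HasDerivAt (fun t => ∑ a, jensenGap (p a) (q a) t)
      (∑ a, (p a * log (p a / q a) - p a + q a)) 0 :=
    HasDerivAt.fun_sum fun a _ => hasDerivAt_jensenGap (hpq a)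
  have hvalue : ∑ a, (p a * log (p a / q a) - p a + q a) = ∑ a, p a * log (p a / q a) := by
    simp [sum_add_distrib, sum_sub_distrib, hp, hq]
  simpa [jensenGap, hvalue] using hderiv.tendsto_slope_zero_right

theorem tendsto_sum_jensenGap_div_atTop (hp : ∀ a, 0 ≤ p a) (hq : ∀ a, 0 ≤ q a) {a₀ : A}
    (hq₀ : q a₀ = 0) (hp₀ : p a₀ ≠ 0) :
    Tendsto (fun t => t⁻¹ * ∑ a, jensenGap (p a) (q a) t) (𝓝[>] 0) atTop := by
  have hlog : Tendsto (fun t => p a₀ * -log t) (𝓝[>] 0) atTop :=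
    (tendsto_neg_atBot_atTop.comp tendsto_log_nhdsGT_zero).const_mul_atTop
      ((hp a₀).lt_of_ne' hp₀)
  refine tendsto_atTop_mono' _ ?_ hlog
  filter_upwards [Ioo_mem_nhdsGT one_pos] with t ⟨ht₀, ht₁⟩
  calc p a₀ * -log t = t⁻¹ * jensenGap (p a₀) (q a₀) t := by
        rw [hq₀, jensenGap_zero_right, negMulLog]
        field_simp
    _ ≤ t⁻¹ * ∑ a, jensenGap (p a) (q a) t :=
        mul_le_mul_of_nonneg_left
          (single_le_sum (fun a _ => jensenGap_nonneg (hp a) (hq a) ht₀.le ht₁.le) (mem_univ a₀))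
          (inv_nonneg.2 ht₀.le)

end Slope

theorem ProbFun.kpush {X U : Type*} [Fintype X] [Fintype U] {K : X → U → ℝ} (hK : Kern K)
    {q : X → ℝ} (hq : ProbFun q) : ProbFun (kpush K q) := by
  refine ⟨fun u => sum_nonneg fun x _ => mul_nonneg (hq.1 x) (hK.1 x u), ?_⟩
  simp only [_root_.kpush]
  rw [sum_comm]
  simp [← mul_sum, hK.2, hq.2]

section Mixture

variable {A : Type*}

def binaryMixture (t : ℝ) (p q : A → ℝ) : Bool → A → ℝ :=
  fun b a => bif b then t * p a else (1 - t) * q a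

theorem jointFun_binaryMixture [Fintype A] {p q : A → ℝ} (hp : ProbFun p) (hq : ProbFun q)
    {t : ℝ} (ht₀ : 0 ≤ t) (ht₁ : t ≤ 1) : JointFun (binaryMixture t p q) := by
  refine ⟨fun b a => ?_, ?_⟩
  · cases b
    · exact mul_nonneg (sub_nonneg.2 ht₁) (hq.1 a)
    · exact mul_nonneg ht₀ (hp.1 a)
  · simp [binaryMixture, ← mul_sum, hp.2, hq.2]

theorem jointOut_binaryMixture {X : Type*} [Fintype X] (t : ℝ) (p q : X → ℝ) (K : X → A → ℝ) :
    jointOut (binaryMixture t p q) K = binaryMixture t (kpush K p) (kpush K q) := by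
  funext b a
  cases b <;> simp [jointOut, binaryMixture, kpush, mul_sum, mul_assoc]

theorem MIfin_binaryMixture [Fintype A] {p q : A → ℝ} (hp : ProbFun p) (hq : ProbFun q)
    {t : ℝ} (ht₀ : 0 < t) (ht₁ : t < 1) :
    MIfin (binaryMixture t p q) = ∑ a, jensenGap (p a) (q a) t := by
  have hrow : ∀ b, ∑ a, binaryMixture t p q b a = bif b then t else 1 - t := by
    intro b; cases b <;> simp [binaryMixture, ← mul_sum, hp.2, hq.2]
  have hcol : ∀ a, ∑ b, binaryMixture t p q b a = t * p a + (1 - t) * q a := by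
    intro a; simp [binaryMixture]
  simp only [MIfin, hrow, hcol, Fintype.sum_bool, ← sum_add_distrib]
  refine sum_congr rfl fun a _ => ?_
  simp only [binaryMixture, cond_true, cond_false, mul_div_mul_left _ _ ht₀.ne',
    mul_div_mul_left _ _ (sub_pos.2 ht₁).ne']
  rcases eq_or_ne (t * p a + (1 - t) * q a) 0 with hm | hm
  · have hpa : p a = 0 := by nlinarith [hp.1 a, hq.1 a]
    have hqa : q a = 0 := by nlinarith [hp.1 a, hq.1 a]
    simp [jensenGap, hpa, hqa]
  · rw [mul_assoc, mul_log_div_eq _ hm, mul_assoc, mul_log_div_eq _ hm]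
    simp only [jensenGap, negMulLog]
    ring

end Mixture

/-- more informative implies larger pairwise KL discrimination. -/
theorem stmt2 {X U V : Type*} [Fintype X] [Fintype U] [Fintype V]
    (KU : X → U → ℝ) (hKU : Kern KU) (KV : X → V → ℝ) (hKV : Kern KV)
    (hinfo : ∀ (Y : Type) [Fintype Y] (p : Y → X → ℝ), JointFun p →
      MIfin (jointOut p KV) ≤ MIfin (jointOut p KU))
    (q0 q1 : X → ℝ) (hq0 : ProbFun q0) (hq1 : ProbFun q1) :
    KLfin (kpush KV q0) (kpush KV q1) ≤ KLfin (kpush KU q0) (kpush KU q1) := by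
  have hslope : ∀ᶠ t in 𝓝[>] 0,
      t⁻¹ * ∑ v, jensenGap (kpush KV q0 v) (kpush KV q1 v) t ≤
        t⁻¹ * ∑ u, jensenGap (kpush KU q0 u) (kpush KU q1 u) t := by
    filter_upwards [Ioo_mem_nhdsGT one_pos] with t ⟨ht₀, ht₁⟩
    have := hinfo Bool _ (jointFun_binaryMixture hq0 hq1 ht₀.le ht₁.le)
    rw [jointOut_binaryMixture, jointOut_binaryMixture,
      MIfin_binaryMixture (hq0.kpush hKV) (hq1.kpush hKV) ht₀ ht₁,
      MIfin_binaryMixture (hq0.kpush hKU) (hq1.kpush hKU) ht₀ ht₁] at this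
    exact mul_le_mul_of_nonneg_left this (inv_nonneg.2 ht₀.le)
  by_cases hU : ∀ u, kpush KU q1 u = 0 → kpush KU q0 u = 0
  swap
  · simp [KLfin, hU]
  have hlimU := tendsto_sum_jensenGap_div (hq0.kpush hKU).2 (hq1.kpush hKU).2 hU
  by_cases hV : ∀ v, kpush KV q1 v = 0 → kpush KV q0 v = 0
  · rw [KLfin, KLfin, if_pos hU, if_pos hV, EReal.coe_le_coe_iff]
    exact le_of_tendsto_of_tendsto
      (tendsto_sum_jensenGap_div (hq0.kpush hKV).2 (hq1.kpush hKV).2 hV) hlimU hslope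
  · simp only [not_forall] at hV
    obtain ⟨v, hv₁, hv₀⟩ := hV
    exact absurd (tendsto_atTop_mono' _ hslope (tendsto_sum_jensenGap_div_atTop
      (hq0.kpush hKV).1 (hq1.kpush hKV).1 hv₁ hv₀)) (not_tendsto_atTop_of_tendsto_nhds hlimU)
end

section
/- Let P_{U|X} and P_{V|X} be Markov kernels on finite alphabets and suppose the deficiency δ(P_{U|X} → P_{V|X}) := inf over Markov kernels M ∈ K(V|U) of E_X ‖(M ∘ P_{U|X})(·|X) − P_{V|X}(·|X)‖_TV is at most ε. Then for every finite concept set Y and every conditional distribution P_{Y|X}, the Bayes risks satisfy R_U − ε ≤ R_V, where R_U = inf over randomized rules ρ_U of Pr(Ŷ_U ≠ Y) and R_V = inf over randomized rules ρ_V of Pr(Ŷ_V ≠ Y). -/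
open Finset

section AuxStmt4

lemma kern_entry_le_one {A B : Type*} [Fintype B] {K : A → B → ℝ} (hK : Kern K)
    (a : A) (b : B) : K a b ≤ 1 := by
  have h := hK.2 a
  calc K a b ≤ ∑ b', K a b' :=
        Finset.single_le_sum (fun b' _ => hK.1 a b') (Finset.mem_univ b)
    _ = 1 := h

lemma sum_mul_le_half {V : Type*} [Fintype V] (c d : V → ℝ) (C : ℝ)
    (hc0 : ∀ v, 0 ≤ c v) (hcC : ∀ v, c v ≤ C) (hd : ∑ v, d v = 0) :
    ∑ v, c v * d v ≤ C * ((∑ v, |d v|) / 2) := by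
  have h1 : ∀ v, c v * d v ≤ C * ((|d v| + d v) / 2) := by
    intro v
    have hdp : 0 ≤ (|d v| + d v) / 2 := by
      have := neg_abs_le (d v); linarith
    have h2 : c v * d v ≤ c v * ((|d v| + d v) / 2) := by
      apply mul_le_mul_of_nonneg_left _ (hc0 v)
      have := le_abs_self (d v); linarith
    exact h2.trans (mul_le_mul_of_nonneg_right (hcC v) hdp)
  calc ∑ v, c v * d v ≤ ∑ v, C * ((|d v| + d v) / 2) :=
        Finset.sum_le_sum fun v _ => h1 v
    _ = C * ((∑ v, |d v|) / 2) := by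
        rw [← Finset.mul_sum, ← Finset.sum_div, Finset.sum_add_distrib, hd, add_zero]

lemma reorderL4 {X U V Y : Type*} [Fintype X] [Fintype U] [Fintype V] [Fintype Y]
    (f : Y → U → V → X → ℝ) :
    ∑ y, ∑ u, ∑ v, ∑ x, f y u v x = ∑ x, ∑ y, ∑ u, ∑ v, f y u v x :=
  calc ∑ y, ∑ u, ∑ v, ∑ x, f y u v x
      = ∑ y, ∑ u, ∑ x, ∑ v, f y u v x :=
        Finset.sum_congr rfl fun _ _ => Finset.sum_congr rfl fun _ _ => Finset.sum_comm
    _ = ∑ y, ∑ x, ∑ u, ∑ v, f y u v x :=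
        Finset.sum_congr rfl fun _ _ => Finset.sum_comm
    _ = ∑ x, ∑ y, ∑ u, ∑ v, f y u v x := Finset.sum_comm

lemma reorderR4 {X U V Y : Type*} [Fintype X] [Fintype U] [Fintype V] [Fintype Y]
    (g : X → V → U → Y → ℝ) :
    ∑ x, ∑ v, ∑ u, ∑ y, g x v u y = ∑ x, ∑ y, ∑ u, ∑ v, g x v u y :=
  calc ∑ x, ∑ v, ∑ u, ∑ y, g x v u y
      = ∑ x, ∑ v, ∑ y, ∑ u, g x v u y :=
        Finset.sum_congr rfl fun _ _ => Finset.sum_congr rfl fun _ _ => Finset.sum_comm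
    _ = ∑ x, ∑ y, ∑ v, ∑ u, g x v u y :=
        Finset.sum_congr rfl fun _ _ => Finset.sum_comm
    _ = ∑ x, ∑ y, ∑ u, ∑ v, g x v u y :=
        Finset.sum_congr rfl fun _ _ => Finset.sum_congr rfl fun _ _ => Finset.sum_comm

end AuxStmt4

/-- deficiency at most `ε` implies `R_U − ε ≤ R_V` on every task. -/


theorem stmt4 {X U V : Type*} [Fintype X] [Fintype U] [Fintype V]
    (KU : X → U → ℝ) (hKU : Kern KU) (KV : X → V → ℝ) (hKV : Kern KV)
    (pX : X → ℝ) (hpX : ProbFun pX) (ε : ℝ)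
    (hdef : deficiency pX KU KV ≤ ε) :
    ∀ (Y : Type) [Fintype Y] (p : Y → X → ℝ), JointFun p →
      (∀ x, ∑ y, p y x = pX x) →
      bayesRisk (jointOut p KU) - ε ≤ bayesRisk (jointOut p KV) := by
  intro Y _ p hp hmarg
  -- nonemptiness of the alphabets
  have hXne : Nonempty X := by
    rcases isEmpty_or_nonempty X with h | h
    · exfalso; have h2 := hpX.2
      rw [Finset.univ_eq_empty, Finset.sum_empty] at h2; norm_num at h2
    · exact h
  have hYne : Nonempty Y := by
    rcases isEmpty_or_nonempty Y with h | h
    · exfalso; have h2 := hp.2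
      rw [Finset.univ_eq_empty, Finset.sum_empty] at h2; norm_num at h2
    · exact h
  obtain ⟨x0⟩ := hXne
  have hVne : Nonempty V := by
    rcases isEmpty_or_nonempty V with h | h
    · exfalso; have h2 := hKV.2 x0
      rw [Finset.univ_eq_empty, Finset.sum_empty] at h2; norm_num at h2
    · exact h
  -- the three sets
  set SU := { e | ∃ ρ : U → Y → ℝ, Kern ρ ∧
      e = 1 - ∑ y, ∑ u, jointOut p KU y u * ρ u y } with hSU_def
  set SV := { e | ∃ ρ : V → Y → ℝ, Kern ρ ∧
      e = 1 - ∑ y, ∑ v, jointOut p KV y v * ρ v y } with hSV_def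
  set DS := { d | ∃ M : U → V → ℝ, Kern M ∧
      d = ∑ x, pX x * tvDist (kcomp M KU x) (KV x) } with hDS_def
  have hBU : bayesRisk (jointOut p KU) = sInf SU := rfl
  have hBV : bayesRisk (jointOut p KV) = sInf SV := rfl
  have hD : deficiency pX KU KV = sInf DS := rfl
  -- the uniform rule shows SV is nonempty
  have hcardY : (0 : ℝ) < (Fintype.card Y : ℝ) := by
    exact_mod_cast Fintype.card_pos
  have hunif : Kern (fun (_ : V) (_ : Y) => (Fintype.card Y : ℝ)⁻¹) := by
    refine ⟨fun _ _ => by positivity, fun _ => ?_⟩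
    rw [Finset.sum_const, nsmul_eq_mul, Finset.card_univ, mul_inv_cancel₀ (ne_of_gt hcardY)]
  have hSVne : SV.Nonempty := ⟨_, _, hunif, rfl⟩
  -- DS is nonempty
  have hMunifK : Kern (fun (_ : U) (v : V) => KV x0 v) :=
    ⟨fun _ v => hKV.1 x0 v, fun _ => hKV.2 x0⟩
  have hDSne : DS.Nonempty := ⟨_, _, hMunifK, rfl⟩
  -- DS is bounded below by 0
  have hDSbdd : BddBelow DS := by
    refine ⟨0, ?_⟩
    rintro d ⟨M, hM, rfl⟩
    apply Finset.sum_nonneg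
    intro x _
    apply mul_nonneg (hpX.1 x)
    apply div_nonneg _ (by norm_num)
    exact Finset.sum_nonneg fun v _ => abs_nonneg _
  -- key: for any kernel M and any rule ρ for V, composing gives a rule for U
  have key : ∀ d ∈ DS, ∀ e ∈ SV, sInf SU ≤ e + d := by
    rintro d ⟨M, hM, rfl⟩ e ⟨ρ, hρ, rfl⟩
    set ρU : U → Y → ℝ := fun u y => ∑ v, M u v * ρ v y with hρU_def
    have hρUK : Kern ρU := by
      constructor
      · intro u y
        exact Finset.sum_nonneg fun v _ => mul_nonneg (hM.1 u v) (hρ.1 v y)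
      · intro u
        calc ∑ y, ∑ v, M u v * ρ v y = ∑ v, ∑ y, M u v * ρ v y := Finset.sum_comm
          _ = ∑ v, M u v * ∑ y, ρ v y :=
              Finset.sum_congr rfl fun v _ => (Finset.mul_sum _ _ _).symm
          _ = ∑ v, M u v := by
              refine Finset.sum_congr rfl fun v _ => ?_
              rw [hρ.2 v, mul_one]
          _ = 1 := hM.2 u
    have hmem : (1 - ∑ y, ∑ u, jointOut p KU y u * ρU u y) ∈ SU := ⟨ρU, hρUK, rfl⟩
    -- the score rearrangements
    have hswapU : ∑ y, ∑ u, jointOut p KU y u * ρU u y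
        = ∑ x, ∑ v, (∑ y, p y x * ρ v y) * kcomp M KU x v := by
      simp only [jointOut, kcomp, hρU_def, Finset.sum_mul, Finset.mul_sum]
      rw [reorderL4 (fun y u v x => p y x * KU x u * (M u v * ρ v y)),
          reorderR4 (fun x v u y => p y x * ρ v y * (KU x u * M u v))]
      exact Finset.sum_congr rfl fun x _ => Finset.sum_congr rfl fun y _ =>
        Finset.sum_congr rfl fun u _ => Finset.sum_congr rfl fun v _ => by ring
    have hswapV : ∑ y, ∑ v, jointOut p KV y v * ρ v y
        = ∑ x, ∑ v, (∑ y, p y x * ρ v y) * KV x v := by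
      simp only [jointOut, Finset.sum_mul, Finset.mul_sum]
      -- LHS : y v x ; RHS : x v y
      calc ∑ y, ∑ v, ∑ x, p y x * KV x v * ρ v y
          = ∑ y, ∑ x, ∑ v, p y x * KV x v * ρ v y :=
            Finset.sum_congr rfl fun _ _ => Finset.sum_comm
        _ = ∑ x, ∑ y, ∑ v, p y x * KV x v * ρ v y := Finset.sum_comm
        _ = ∑ x, ∑ v, ∑ y, p y x * KV x v * ρ v y :=
            Finset.sum_congr rfl fun _ _ => Finset.sum_comm
        _ = ∑ x, ∑ v, ∑ y, p y x * ρ v y * KV x v :=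
            Finset.sum_congr rfl fun x _ => Finset.sum_congr rfl fun v _ =>
              Finset.sum_congr rfl fun y _ => by ring
    -- per-x bound
    have hperx : ∀ x, ∑ v, (∑ y, p y x * ρ v y) * (KV x v - kcomp M KU x v)
        ≤ pX x * tvDist (kcomp M KU x) (KV x) := by
      intro x
      have hc0 : ∀ v, 0 ≤ ∑ y, p y x * ρ v y := fun v =>
        Finset.sum_nonneg fun y _ => mul_nonneg (hp.1 y x) (hρ.1 v y)
      have hcC : ∀ v, ∑ y, p y x * ρ v y ≤ pX x := by
        intro v
        calc ∑ y, p y x * ρ v y ≤ ∑ y, p y x := by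
              refine Finset.sum_le_sum fun y _ => ?_
              exact mul_le_of_le_one_right (hp.1 y x) (kern_entry_le_one hρ v y)
          _ = pX x := hmarg x
      have hd0 : ∑ v, (KV x v - kcomp M KU x v) = 0 := by
        have hA : ∑ v, kcomp M KU x v = 1 := by
          calc ∑ v, ∑ u, KU x u * M u v = ∑ u, ∑ v, KU x u * M u v := Finset.sum_comm
            _ = ∑ u, KU x u * ∑ v, M u v :=
                Finset.sum_congr rfl fun u _ => (Finset.mul_sum _ _ _).symm
            _ = ∑ u, KU x u := by
                refine Finset.sum_congr rfl fun u _ => ?_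
                rw [hM.2 u, mul_one]
            _ = 1 := hKU.2 x
        rw [Finset.sum_sub_distrib, hKV.2 x, hA, sub_self]
      have h := sum_mul_le_half (fun v => ∑ y, p y x * ρ v y)
        (fun v => KV x v - kcomp M KU x v) (pX x) hc0 hcC hd0
      have habs : (∑ v, |KV x v - kcomp M KU x v|) / 2
          = tvDist (kcomp M KU x) (KV x) := by
        unfold tvDist
        congr 1
        exact Finset.sum_congr rfl fun v _ => abs_sub_comm _ _
      calc ∑ v, (∑ y, p y x * ρ v y) * (KV x v - kcomp M KU x v)
          ≤ pX x * ((∑ v, |KV x v - kcomp M KU x v|) / 2) := h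
        _ = pX x * tvDist (kcomp M KU x) (KV x) := by rw [habs]
    have hsum : ∑ x, ∑ v, (∑ y, p y x * ρ v y) * (KV x v - kcomp M KU x v)
        ≤ ∑ x, pX x * tvDist (kcomp M KU x) (KV x) :=
      Finset.sum_le_sum fun x _ => hperx x
    have hsplit : ∑ x, ∑ v, (∑ y, p y x * ρ v y) * (KV x v - kcomp M KU x v)
        = (∑ x, ∑ v, (∑ y, p y x * ρ v y) * KV x v)
          - ∑ x, ∑ v, (∑ y, p y x * ρ v y) * kcomp M KU x v := by
      rw [← Finset.sum_sub_distrib]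
      refine Finset.sum_congr rfl fun x _ => ?_
      rw [← Finset.sum_sub_distrib]
      exact Finset.sum_congr rfl fun v _ => by ring
    have h1 : sInf SU ≤ 1 - ∑ y, ∑ u, jointOut p KU y u * ρU u y := by
      apply csInf_le _ hmem
      refine ⟨1 - 1, ?_⟩
      rintro e' ⟨ρ', hρ', rfl⟩
      have hscore : ∑ y, ∑ u, jointOut p KU y u * ρ' u y ≤ 1 := by
        have hle : ∑ y, ∑ u, jointOut p KU y u * ρ' u y
            ≤ ∑ y, ∑ u, jointOut p KU y u := by
          refine Finset.sum_le_sum fun y _ => Finset.sum_le_sum fun u _ => ?_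
          refine mul_le_of_le_one_right ?_ (kern_entry_le_one hρ' u y)
          exact Finset.sum_nonneg fun x _ => mul_nonneg (hp.1 y x) (hKU.1 x u)
        have htot : ∑ y, ∑ u, jointOut p KU y u = 1 := by
          simp only [jointOut]
          calc ∑ y, ∑ u, ∑ x, p y x * KU x u
              = ∑ y, ∑ x, ∑ u, p y x * KU x u :=
                Finset.sum_congr rfl fun _ _ => Finset.sum_comm
            _ = ∑ y, ∑ x, p y x * ∑ u, KU x u :=
                Finset.sum_congr rfl fun y _ => Finset.sum_congr rfl fun x _ =>
                  (Finset.mul_sum _ _ _).symm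
            _ = ∑ y, ∑ x, p y x := by
                refine Finset.sum_congr rfl fun y _ => Finset.sum_congr rfl fun x _ => ?_
                rw [hKU.2 x, mul_one]
            _ = 1 := hp.2
        linarith
      linarith
    -- assemble
    rw [hswapU] at h1
    rw [hswapV]
    linarith [hsum, hsplit]
  have step1 : ∀ d ∈ DS, sInf SU - d ≤ sInf SV := by
    intro d hd
    refine le_csInf hSVne fun e he => ?_
    linarith [key d hd e he]
  have step2 : sInf SU - sInf SV ≤ sInf DS := by
    refine le_csInf hDSne fun d hd => ?_
    linarith [step1 d hd]
  rw [hBU, hBV]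
  rw [hD] at hdef
  linarith
end

section
/- Let P_{U|X}, P_{V|X} be Markov kernels on finite alphabets and Y a finite concept set. For any conditional distribution P_{Y|X}, the Bayes risks satisfy |R_U − R_V| ≤ max{ δ(P_{U|X} → P_{V|X}), δ(P_{V|X} → P_{U|X}) }, where δ denotes the deficiency (infimum over simulating kernels of the expected total variation error) and R_U, R_V are the Bayes error probabilities when predicting Y from U and V respectively. -/
open Finset

lemma dv_sum4 {A B C D : Type*} [Fintype A] [Fintype B] [Fintype C] [Fintype D]
    (f : A → B → C → D → ℝ) :
    ∑ a, ∑ b, ∑ c, ∑ d, f a b c d = ∑ d, ∑ c, ∑ a, ∑ b, f a b c d := by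
  calc ∑ a, ∑ b, ∑ c, ∑ d, f a b c d
      = ∑ a, ∑ b, ∑ d, ∑ c, f a b c d :=
        Finset.sum_congr rfl fun a _ => Finset.sum_congr rfl fun b _ => Finset.sum_comm ..
    _ = ∑ a, ∑ d, ∑ b, ∑ c, f a b c d := Finset.sum_congr rfl fun a _ => Finset.sum_comm ..
    _ = ∑ d, ∑ a, ∑ b, ∑ c, f a b c d := Finset.sum_comm ..
    _ = ∑ d, ∑ a, ∑ c, ∑ b, f a b c d :=
        Finset.sum_congr rfl fun d _ => Finset.sum_congr rfl fun a _ => Finset.sum_comm ..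
    _ = ∑ d, ∑ c, ∑ a, ∑ b, f a b c d := Finset.sum_congr rfl fun d _ => Finset.sum_comm ..

lemma dv_sum3 {A B C : Type*} [Fintype A] [Fintype B] [Fintype C]
    (f : A → B → C → ℝ) :
    ∑ a, ∑ b, ∑ c, f a b c = ∑ c, ∑ b, ∑ a, f a b c := by
  calc ∑ a, ∑ b, ∑ c, f a b c
      = ∑ a, ∑ c, ∑ b, f a b c := Finset.sum_congr rfl fun a _ => Finset.sum_comm ..
    _ = ∑ c, ∑ a, ∑ b, f a b c := Finset.sum_comm ..
    _ = ∑ c, ∑ b, ∑ a, f a b c := Finset.sum_congr rfl fun c _ => Finset.sum_comm ..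

lemma dv_abs_bound {V : Type*} [Fintype V] (Δ g : V → ℝ) (c : ℝ) (hΔ : ∑ v, Δ v = 0)
    (hg0 : ∀ v, 0 ≤ g v) (hgc : ∀ v, g v ≤ c) :
    |∑ v, Δ v * g v| ≤ c / 2 * ∑ v, |Δ v| := by
  have h1 : ∑ v, Δ v * g v = ∑ v, Δ v * (g v - c / 2) := by
    simp only [mul_sub]
    rw [Finset.sum_sub_distrib, ← Finset.sum_mul, hΔ]; ring
  rw [h1]
  calc |∑ v, Δ v * (g v - c/2)| ≤ ∑ v, |Δ v * (g v - c/2)| := Finset.abs_sum_le_sum_abs _ _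
    _ ≤ ∑ v, |Δ v| * (c/2) := Finset.sum_le_sum fun v _ => by
        rw [abs_mul]
        exact mul_le_mul_of_nonneg_left
          (abs_le.2 ⟨by linarith [hg0 v], by linarith [hgc v]⟩) (abs_nonneg _)
    _ = c/2 * ∑ v, |Δ v| := by rw [← Finset.sum_mul]; ring

lemma dv_rho_le_one {U Y : Type*} [Fintype Y] (ρ : U → Y → ℝ) (hρ : Kern ρ) (u : U) (y : Y) :
    ρ u y ≤ 1 := by
  have h := Finset.single_le_sum (f := ρ u) (fun y _ => hρ.1 u y) (Finset.mem_univ y)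
  rw [hρ.2 u] at h; exact h

lemma dv_jointOut_joint {Y X U : Type*} [Fintype Y] [Fintype X] [Fintype U]
    (p : Y → X → ℝ) (hp : JointFun p) (K : X → U → ℝ) (hK : Kern K) :
    JointFun (jointOut p K) := by
  constructor
  · intro y u; exact Finset.sum_nonneg fun x _ => mul_nonneg (hp.1 y x) (hK.1 x u)
  · have h : ∀ y : Y, ∑ u, ∑ x, p y x * K x u = ∑ x, p y x := by
      intro y
      rw [Finset.sum_comm]
      exact Finset.sum_congr rfl fun x _ => by rw [← Finset.mul_sum, hK.2 x, mul_one]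
    simp only [jointOut]
    calc ∑ y, ∑ u, ∑ x, p y x * K x u = ∑ y, ∑ x, p y x :=
          Finset.sum_congr rfl fun y _ => h y
      _ = 1 := hp.2

lemma dv_risk_bdd {Y U : Type*} [Fintype Y] [Fintype U] (r : Y → U → ℝ) (hr : JointFun r) :
    BddBelow { e | ∃ ρ : U → Y → ℝ, Kern ρ ∧ e = 1 - ∑ y, ∑ u, r y u * ρ u y } := by
  refine ⟨0, ?_⟩
  rintro e ⟨ρ, hρ, rfl⟩
  have h : ∑ y, ∑ u, r y u * ρ u y ≤ ∑ y, ∑ u, r y u :=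
    Finset.sum_le_sum fun y _ => Finset.sum_le_sum fun u _ =>
      mul_le_of_le_one_right (hr.1 y u) (dv_rho_le_one ρ hρ u y)
  rw [hr.2] at h
  linarith

lemma dv_risk_nonempty {Y U : Type*} [Fintype Y] [Fintype U] [Nonempty Y] (r : Y → U → ℝ) :
    { e | ∃ ρ : U → Y → ℝ, Kern ρ ∧ e = 1 - ∑ y, ∑ u, r y u * ρ u y }.Nonempty := by
  classical
  refine ⟨_, fun u y => if y = Classical.arbitrary Y then 1 else 0, ⟨?_, ?_⟩, rfl⟩
  · intro u y; dsimp only; split <;> norm_num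
  · intro u; simp

lemma dv_nonemptyY {Y X : Type*} [Fintype Y] [Fintype X] (p : Y → X → ℝ) (hp : JointFun p) :
    Nonempty Y := by
  rcases isEmpty_or_nonempty Y with h | h
  · exfalso; have := hp.2; rw [Finset.univ_eq_empty] at this; simp at this
  · exact h

lemma dv_nonemptyX {Y X : Type*} [Fintype Y] [Fintype X] (p : Y → X → ℝ) (hp : JointFun p) :
    Nonempty X := by
  rcases isEmpty_or_nonempty X with h | h
  · exfalso; have := hp.2; simp [Finset.univ_eq_empty (α := X)] at this
  · exact h

lemma dv_nonemptyB {A B : Type*} [Fintype B] (K : A → B → ℝ) (hK : Kern K) (a : A) :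
    Nonempty B := by
  rcases isEmpty_or_nonempty B with h | h
  · exfalso; have := hK.2 a; rw [Finset.univ_eq_empty] at this; simp at this
  · exact h

/-- Key lemma: the risk under `KU` exceeds the risk under `KV` by at most the
simulation error of any kernel `M`. -/
lemma dv_risk_le {Y X U V : Type*} [Fintype Y] [Fintype X] [Fintype U] [Fintype V]
    (KU : X → U → ℝ) (hKU : Kern KU) (KV : X → V → ℝ) (hKV : Kern KV)
    (p : Y → X → ℝ) (hp : JointFun p) (M : U → V → ℝ) (hM : Kern M) :
    bayesRisk (jointOut p KU) ≤ bayesRisk (jointOut p KV) +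
      ∑ x, (∑ y, p y x) * tvDist (kcomp M KU x) (KV x) := by
  have hY : Nonempty Y := dv_nonemptyY p hp
  set D := ∑ x, (∑ y, p y x) * tvDist (kcomp M KU x) (KV x) with hD
  have key : ∀ e ∈ { e | ∃ ρ : V → Y → ℝ, Kern ρ ∧
      e = 1 - ∑ y, ∑ v, jointOut p KV y v * ρ v y },
      bayesRisk (jointOut p KU) - D ≤ e := by
    rintro e ⟨ρ, hρ, rfl⟩
    have hρ' : Kern (kcomp ρ M) := by
      constructor
      · intro u y; exact Finset.sum_nonneg fun v _ => mul_nonneg (hM.1 u v) (hρ.1 v y)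
      · intro u
        simp only [kcomp]
        rw [Finset.sum_comm]
        calc ∑ v, ∑ y, M u v * ρ v y = ∑ v, M u v * ∑ y, ρ v y :=
              Finset.sum_congr rfl fun v _ => by rw [Finset.mul_sum]
          _ = ∑ v, M u v := Finset.sum_congr rfl fun v _ => by rw [hρ.2 v, mul_one]
          _ = 1 := hM.2 u
    have h1 : bayesRisk (jointOut p KU) ≤ 1 - ∑ y, ∑ u, jointOut p KU y u * kcomp ρ M u y :=
      csInf_le (dv_risk_bdd _ (dv_jointOut_joint p hp KU hKU)) ⟨kcomp ρ M, hρ', rfl⟩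
    have hSU : ∑ y, ∑ u, jointOut p KU y u * kcomp ρ M u y
        = ∑ x, ∑ v, kcomp M KU x v * (∑ y, p y x * ρ v y) := by
      simp only [jointOut, kcomp]
      simp only [Finset.sum_mul, Finset.mul_sum]
      rw [dv_sum4 (fun y u v x => p y x * KU x u * (M u v * ρ v y))]
      refine Finset.sum_congr rfl fun x _ => Finset.sum_congr rfl fun v _ => ?_
      refine Finset.sum_congr rfl fun y _ => Finset.sum_congr rfl fun u _ => ?_
      ring
    have hSV : ∑ y, ∑ v, jointOut p KV y v * ρ v y
        = ∑ x, ∑ v, KV x v * (∑ y, p y x * ρ v y) := by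
      simp only [jointOut]
      simp only [Finset.sum_mul, Finset.mul_sum]
      rw [dv_sum3 (fun y v x => p y x * KV x v * ρ v y)]
      refine Finset.sum_congr rfl fun x _ => Finset.sum_congr rfl fun v _ => ?_
      refine Finset.sum_congr rfl fun y _ => ?_
      ring
    -- per-x bound
    have perx : ∀ x : X, ∑ v, KV x v * (∑ y, p y x * ρ v y)
        - ∑ v, kcomp M KU x v * (∑ y, p y x * ρ v y)
        ≤ (∑ y, p y x) * tvDist (kcomp M KU x) (KV x) := by
      intro x
      set g : V → ℝ := fun v => ∑ y, p y x * ρ v y with hg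
      set c : ℝ := ∑ y, p y x with hc
      have hΔ : ∑ v, (KV x v - kcomp M KU x v) = 0 := by
        rw [Finset.sum_sub_distrib, hKV.2 x]
        have : ∑ v, kcomp M KU x v = 1 := by
          simp only [kcomp]
          rw [Finset.sum_comm]
          calc ∑ u, ∑ v, KU x u * M u v = ∑ u, KU x u * ∑ v, M u v :=
                Finset.sum_congr rfl fun u _ => by rw [Finset.mul_sum]
            _ = ∑ u, KU x u := Finset.sum_congr rfl fun u _ => by rw [hM.2 u, mul_one]
            _ = 1 := hKU.2 x
        rw [this]; ring
      have hg0 : ∀ v, 0 ≤ g v := fun v =>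
        Finset.sum_nonneg fun y _ => mul_nonneg (hp.1 y x) (hρ.1 v y)
      have hgc : ∀ v, g v ≤ c := fun v =>
        Finset.sum_le_sum fun y _ => mul_le_of_le_one_right (hp.1 y x) (dv_rho_le_one ρ hρ v y)
      have habs := dv_abs_bound (fun v => KV x v - kcomp M KU x v) g c hΔ hg0 hgc
      have heq : ∑ v, |KV x v - kcomp M KU x v| = ∑ v, |kcomp M KU x v - KV x v| :=
        Finset.sum_congr rfl fun v _ => abs_sub_comm _ _
      have hsum : ∑ v, (KV x v - kcomp M KU x v) * g v
          = ∑ v, KV x v * g v - ∑ v, kcomp M KU x v * g v := by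
        rw [← Finset.sum_sub_distrib]
        exact Finset.sum_congr rfl fun v _ => by ring
      have h2 : ∑ v, (KV x v - kcomp M KU x v) * g v
          ≤ c / 2 * ∑ v, |KV x v - kcomp M KU x v| := le_trans (le_abs_self _) habs
      rw [hsum] at h2
      calc ∑ v, KV x v * g v - ∑ v, kcomp M KU x v * g v
          ≤ c / 2 * ∑ v, |KV x v - kcomp M KU x v| := h2
        _ = c * tvDist (kcomp M KU x) (KV x) := by rw [heq, tvDist]; ring
    have hdiff : ∑ y, ∑ v, jointOut p KV y v * ρ v y
        - ∑ y, ∑ u, jointOut p KU y u * kcomp ρ M u y ≤ D := by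
      rw [hSU, hSV, hD, ← Finset.sum_sub_distrib]
      exact Finset.sum_le_sum fun x _ => perx x
    linarith
  have h := le_csInf (dv_risk_nonempty (jointOut p KV)) key
  have h2 : bayesRisk (jointOut p KU) - D ≤ bayesRisk (jointOut p KV) := h
  linarith

/-- Bayes risks differ by at most the maximum of the two deficiencies. -/
theorem stmt6 {Y X U V : Type*} [Fintype Y] [Fintype X] [Fintype U] [Fintype V]
    (KU : X → U → ℝ) (hKU : Kern KU) (KV : X → V → ℝ) (hKV : Kern KV)
    (p : Y → X → ℝ) (hp : JointFun p) :
    |bayesRisk (jointOut p KU) - bayesRisk (jointOut p KV)| ≤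
      max (deficiency (fun x => ∑ y, p y x) KU KV)
          (deficiency (fun x => ∑ y, p y x) KV KU) := by
  classical
  have hY : Nonempty Y := dv_nonemptyY p hp
  have hX : Nonempty X := dv_nonemptyX p hp
  obtain ⟨x0⟩ := hX
  have hU : Nonempty U := dv_nonemptyB KU hKU x0
  have hV : Nonempty V := dv_nonemptyB KV hKV x0
  have hdUV : { d | ∃ M : U → V → ℝ, Kern M ∧
      d = ∑ x, (fun x => ∑ y, p y x) x * tvDist (kcomp M KU x) (KV x) }.Nonempty := by
    refine ⟨_, fun u v => if v = Classical.arbitrary V then 1 else 0, ⟨?_, ?_⟩, rfl⟩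
    · intro u v; dsimp only; split <;> norm_num
    · intro u; simp
  have hdVU : { d | ∃ M : V → U → ℝ, Kern M ∧
      d = ∑ x, (fun x => ∑ y, p y x) x * tvDist (kcomp M KV x) (KU x) }.Nonempty := by
    refine ⟨_, fun v u => if u = Classical.arbitrary U then 1 else 0, ⟨?_, ?_⟩, rfl⟩
    · intro v u; dsimp only; split <;> norm_num
    · intro v; simp
  have h1 : bayesRisk (jointOut p KU) - bayesRisk (jointOut p KV) ≤
      deficiency (fun x => ∑ y, p y x) KU KV := by
    refine le_csInf hdUV ?_
    rintro d ⟨M, hM, rfl⟩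
    have h := dv_risk_le KU hKU KV hKV p hp M hM
    have heq : ∑ x, (fun x => ∑ y, p y x) x * tvDist (kcomp M KU x) (KV x)
        = ∑ x, (∑ y, p y x) * tvDist (kcomp M KU x) (KV x) := rfl
    rw [heq]; linarith
  have h2 : bayesRisk (jointOut p KV) - bayesRisk (jointOut p KU) ≤
      deficiency (fun x => ∑ y, p y x) KV KU := by
    refine le_csInf hdVU ?_
    rintro d ⟨M, hM, rfl⟩
    have h := dv_risk_le KV hKV KU hKU p hp M hM
    have heq : ∑ x, (fun x => ∑ y, p y x) x * tvDist (kcomp M KV x) (KU x)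
        = ∑ x, (∑ y, p y x) * tvDist (kcomp M KV x) (KU x) := rfl
    rw [heq]; linarith
  rw [abs_sub_le_iff]
  exact ⟨le_trans h1 (le_max_left _ _), le_trans h2 (le_max_right _ _)⟩
end

section
/- Mutual information is jointly controlled along a two-point mixture: let P_{X|Y=y₀}, P_{X|Y=y₁} be distributions on a finite set X, and for λ ∈ [0,1] let Y_λ be a {y₀,y₁}-valued random variable with Pr(Y_λ = y₀) = λ, with X drawn from P_{X|Y=y}. Then the function λ ↦ I(Y_λ; X) is continuous on [0,1], equals 0 at λ = 0 and λ = 1, and its one-sided derivative at λ = 0 equals KL(P_{X|Y=y₀} ‖ P_{X|Y=y₁}) (possibly +∞), assuming P_{X|Y=y₀} is absolutely continuous with respect to P_{X|Y=y₁}. -/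
open Finset

/-!
Summing the joint pmf over `x` shows
`I(Y_λ; X) = H(λ q₀ + (1-λ) q₁) - λ H(q₀) - (1-λ) H(q₁)`,
coordinatewise the Jensen gap of the concave function `negMulLog`. This expression is
continuous in `λ` on all of `ℝ` and vanishes at `λ = 0, 1`. Where `q₁ x > 0` it is
differentiable at `λ = 0` with derivative `q₀ x log (q₀ x / q₁ x) + (q₁ x - q₀ x)`; where
`q₁ x = 0` absolute continuity makes it identically zero. Summing, the linear terms cancel
and leave the KL divergence.
-/

open Real

noncomputable def negMulLogJensenGap (l a b : ℝ) : ℝ :=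
  negMulLog (l * a + (1 - l) * b) - l * negMulLog a - (1 - l) * negMulLog b

lemma mul_log_div_mul_eq (t a m : ℝ) (h : t * a ≠ 0 → m ≠ 0) :
    t * a * log (t * a / (t * m)) = t * a * (log a - log m) := by
  by_cases hta : t * a = 0
  · simp [hta]
  obtain ⟨ht, ha⟩ := mul_ne_zero_iff.mp hta
  rw [mul_div_mul_left _ _ ht, log_div ha (h hta)]

lemma mixture_mul_log_eq_negMulLogJensenGap {l a b : ℝ} (hl0 : 0 ≤ l) (hl1 : l ≤ 1)
    (ha : 0 ≤ a) (hb : 0 ≤ b) :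
    l * a * log (l * a / (l * (l * a + (1 - l) * b)))
      + (1 - l) * b * log ((1 - l) * b / ((1 - l) * (l * a + (1 - l) * b)))
      = negMulLogJensenGap l a b := by
  have hla : 0 ≤ l * a := mul_nonneg hl0 ha
  have hlb : 0 ≤ (1 - l) * b := mul_nonneg (by linarith) hb
  rw [mul_log_div_mul_eq _ _ _ fun h => (add_pos_of_pos_of_nonneg (hla.lt_of_ne' h) hlb).ne',
    mul_log_div_mul_eq _ _ _ fun h => (add_pos_of_nonneg_of_pos hla (hlb.lt_of_ne' h)).ne']
  simp only [negMulLogJensenGap, negMulLog]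
  ring

lemma MIfin_mixture_eq_sum_negMulLogJensenGap {X : Type*} [Fintype X] {q0 q1 : X → ℝ}
    (h0 : ProbFun q0) (h1 : ProbFun q1) {l : ℝ} (hl : l ∈ Set.Icc (0 : ℝ) 1) :
    MIfin (fun (b : Bool) x => if b then l * q0 x else (1 - l) * q1 x)
      = ∑ x, negMulLogJensenGap l (q0 x) (q1 x) := by
  have hrow0 : ∑ x, l * q0 x = l := by rw [← mul_sum, h0.2, mul_one]
  have hrow1 : ∑ x, (1 - l) * q1 x = 1 - l := by rw [← mul_sum, h1.2, mul_one]
  simp only [MIfin, Fintype.sum_bool, if_true, Bool.false_eq_true, if_false, hrow0, hrow1,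
    ← sum_add_distrib]
  exact sum_congr rfl fun x _ =>
    mixture_mul_log_eq_negMulLogJensenGap hl.1 hl.2 (h0.1 x) (h1.1 x)

@[simp]
lemma negMulLogJensenGap_zero_left (a b : ℝ) : negMulLogJensenGap 0 a b = 0 := by
  simp [negMulLogJensenGap]

@[simp]
lemma negMulLogJensenGap_one_left (a b : ℝ) : negMulLogJensenGap 1 a b = 0 := by
  simp [negMulLogJensenGap]

lemma continuous_negMulLogJensenGap (a b : ℝ) :
    Continuous fun l => negMulLogJensenGap l a b := by
  unfold negMulLogJensenGap
  fun_prop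

lemma hasDerivAt_negMulLogJensenGap_zero {a b : ℝ} (hab : b = 0 → a = 0) :
    HasDerivAt (fun l => negMulLogJensenGap l a b) (a * log (a / b) + (b - a)) 0 := by
  rcases eq_or_ne b 0 with rfl | hb
  · obtain rfl := hab rfl
    simpa [negMulLogJensenGap] using hasDerivAt_const (0 : ℝ) (0 : ℝ)
  have hmix : HasDerivAt (fun l : ℝ => l * a + (1 - l) * b) (1 * a + (0 - 1) * b) 0 :=
    ((hasDerivAt_id 0).mul_const a).add (((hasDerivAt_const 0 1).sub (hasDerivAt_id 0)).mul_const b)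
  have hgap := (((hasDerivAt_negMulLog hb).comp_of_eq 0 hmix (by simp)).sub
      ((hasDerivAt_id 0).mul_const (negMulLog a))).sub
    (((hasDerivAt_const 0 1).sub (hasDerivAt_id 0)).mul_const (negMulLog b))
  refine hgap.congr_deriv ?_
  rcases eq_or_ne a 0 with rfl | ha
  · simp only [negMulLog]
    ring
  · rw [log_div ha hb]
    simp only [negMulLog]
    ring

/-- mutual information along a two-point mixture is continuous,
vanishes at the endpoints, and its right derivative at `0` is the KL divergence. -/
theorem stmt17 {X : Type*} [Fintype X] (q0 q1 : X → ℝ)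
    (h0 : ProbFun q0) (h1 : ProbFun q1)
    (hac : ∀ x, q1 x = 0 → q0 x = 0) :
    ContinuousOn (fun l : ℝ =>
        MIfin (fun (b : Bool) x => if b then l * q0 x else (1 - l) * q1 x))
      (Set.Icc 0 1) ∧
    MIfin (fun (b : Bool) x => if b then (0 : ℝ) * q0 x else (1 - 0) * q1 x) = 0 ∧
    MIfin (fun (b : Bool) x => if b then (1 : ℝ) * q0 x else (1 - 1) * q1 x) = 0 ∧
    HasDerivWithinAt (fun l : ℝ =>
        MIfin (fun (b : Bool) x => if b then l * q0 x else (1 - l) * q1 x))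
      (∑ x, q0 x * Real.log (q0 x / q1 x)) (Set.Ici 0) 0 := by
  have hEq : ∀ l ∈ Set.Icc (0 : ℝ) 1,
      MIfin (fun (b : Bool) x => if b then l * q0 x else (1 - l) * q1 x)
        = ∑ x, negMulLogJensenGap l (q0 x) (q1 x) :=
    fun l hl => MIfin_mixture_eq_sum_negMulLogJensenGap h0 h1 hl
  have hderiv : HasDerivAt (fun l => ∑ x, negMulLogJensenGap l (q0 x) (q1 x))
      (∑ x, q0 x * log (q0 x / q1 x)) 0 := by
    refine (HasDerivAt.fun_sum fun x _ => hasDerivAt_negMulLogJensenGap_zero (hac x)).congr_deriv ?_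
    rw [sum_add_distrib, sum_sub_distrib, h0.2, h1.2, sub_self, add_zero]
  refine ⟨(continuous_finsetSum _ fun x _ =>
      continuous_negMulLogJensenGap (q0 x) (q1 x)).continuousOn.congr hEq, ?_, ?_, ?_⟩
  · rw [hEq 0 (by norm_num)]
    simp
  · rw [hEq 1 (by norm_num)]
    simp
  · exact hderiv.hasDerivWithinAt.congr_of_eventuallyEq
      (Filter.eventuallyEq_of_mem (Icc_mem_nhdsGE zero_lt_one) hEq) (hEq 0 (by norm_num))
end
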